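/- arXiv:1505.00546 — 6 statements merged into one kernel-verified Lean document; each statement's English description precedes it below -/
import Mathlib

section
/- For any two cliques d and d' of an independence graph (Σ, I), the alternating sum over cliques δ with δ ≤ d' and d → δ (Cartier-Foata admissible, i.e., every letter of δ has a non-independent letter in d) of (-1)^{|δ|} equals 1 if d is parallel to d' (i.e., d × d' ⊆ I), and 0 otherwise. -/
open scoped Classical

/-- A clique of the independence graph `(Σ, I)`. -/
def IsCliq {α : Type*} (I : α → α → Prop) (c : Finset α) : Prop :=
  ∀ a ∈ c, ∀ b ∈ c, a ≠ b → I a b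

/-- Cartier–Foata admissibility `c → c'`: every letter of `c'` has a
non-independent letter in `c`. -/
def CFadm {α : Type*} (I : α → α → Prop) (c c' : Finset α) : Prop :=
  ∀ b ∈ c', ∃ a ∈ c, ¬ I a b

/-- Parallelism `c ∥ c'`, i.e. `c × c' ⊆ I`. -/
def Par {α : Type*} (I : α → α → Prop) (c c' : Finset α) : Prop :=
  ∀ a ∈ c, ∀ b ∈ c', I a b

theorem binomial_formula_for_cliques {α : Type*} [Fintype α] (I : α → α → Prop)
    (hsymm : ∀ a b, I a b → I b a) (hirr : ∀ a, ¬ I a a)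
    (d d' : Finset α) (hd : IsCliq I d) (hd' : IsCliq I d') :
    (∑ δ : Finset α,
        if IsCliq I δ ∧ δ ⊆ d' ∧ CFadm I d δ then ((-1 : ℤ) ^ δ.card) else 0) =
      if Par I d d' then 1 else 0 := by
  set S : Finset α := d'.filter (fun b => ∃ a ∈ d, ¬ I a b) with hS
  have hcond : ∀ δ : Finset α,
      (IsCliq I δ ∧ δ ⊆ d' ∧ CFadm I d δ) ↔ δ ∈ S.powerset := by
    intro δ
    simp only [Finset.mem_powerset]
    constructor
    · rintro ⟨-, hsub, hadm⟩ b hb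
      exact Finset.mem_filter.2 ⟨hsub hb, hadm b hb⟩
    · intro h
      have hsub : δ ⊆ d' := fun b hb => (Finset.mem_filter.1 (h hb)).1
      refine ⟨fun a ha b hb hab => hd' a (hsub ha) b (hsub hb) hab, hsub,
        fun b hb => (Finset.mem_filter.1 (h hb)).2⟩
  have h1 : (∑ δ : Finset α,
      if IsCliq I δ ∧ δ ⊆ d' ∧ CFadm I d δ then ((-1 : ℤ) ^ δ.card) else 0)
      = ∑ δ ∈ S.powerset, (-1 : ℤ) ^ δ.card := by
    rw [← Finset.sum_filter]
    apply Finset.sum_congr _ (fun _ _ => rfl)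
    ext δ
    simp [hcond δ]
  rw [h1, Finset.sum_powerset_neg_one_pow_card]
  have h2 : S = ∅ ↔ Par I d d' := by
    constructor
    · intro h a ha b hb
      by_contra hI
      have : b ∈ S := Finset.mem_filter.2 ⟨hb, ⟨a, ha, hI⟩⟩
      simp [h] at this
    · intro h
      rw [Finset.eq_empty_iff_forall_notMem]
      intro b hb
      obtain ⟨hb', a, ha, hI⟩ := Finset.mem_filter.1 hb
      exact hI (h a ha b hb')
  simp [h2]
end

section
/- For cliques c, c₀ of an independence graph, the sum over nonempty cliques γ with γ ≤ c and c₀ → γ of (-1)^{|γ|} equals -1 if ¬(c ∥ c₀), and 0 if c ∥ c₀. -/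
open scoped Classical

theorem alternating_sum_nonempty_cliques {α : Type*} [Fintype α] (I : α → α → Prop)
    (hsymm : ∀ a b, I a b → I b a) (hirr : ∀ a, ¬ I a a)
    (c c₀ : Finset α) (hc : IsCliq I c) (hc₀ : IsCliq I c₀) :
    (∑ γ : Finset α,
        if γ.Nonempty ∧ IsCliq I γ ∧ γ ⊆ c ∧ CFadm I c₀ γ then ((-1 : ℤ) ^ γ.card) else 0) =
      if Par I c c₀ then 0 else -1 := by
  set S : Finset α := c.filter (fun a => ∃ x ∈ c₀, ¬ I x a) with hS
  have hcond : ∀ γ : Finset α,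
      (γ.Nonempty ∧ IsCliq I γ ∧ γ ⊆ c ∧ CFadm I c₀ γ) ↔ (γ.Nonempty ∧ γ ⊆ S) := by
    intro γ
    constructor
    · rintro ⟨hne, _, hsub, hadm⟩
      refine ⟨hne, fun b hb => ?_⟩
      rcases hadm b hb with ⟨a, ha, hnia⟩
      exact Finset.mem_filter.mpr ⟨hsub hb, a, ha, hnia⟩
    · rintro ⟨hne, hsub⟩
      have hsubc : γ ⊆ c := fun b hb => (Finset.mem_filter.mp (hsub hb)).1
      refine ⟨hne, fun a ha b hb hab => hc a (hsubc ha) b (hsubc hb) hab, hsubc, ?_⟩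
      intro b hb
      rcases (Finset.mem_filter.mp (hsub hb)).2 with ⟨x, hx, hnx⟩
      exact ⟨x, hx, hnx⟩
  have h1 : (∑ γ : Finset α,
        if γ.Nonempty ∧ IsCliq I γ ∧ γ ⊆ c ∧ CFadm I c₀ γ then ((-1 : ℤ) ^ γ.card) else 0)
      = ∑ γ ∈ S.powerset, if γ.Nonempty then ((-1 : ℤ) ^ γ.card) else 0 := by
    rw [← Finset.sum_subset (Finset.subset_univ S.powerset)]
    · apply Finset.sum_congr rfl
      intro γ hγ
      simp only [hcond]
      have : γ ⊆ S := Finset.mem_powerset.mp hγ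
      simp [this]
    · intro γ _ hγ
      simp only [hcond]
      have : ¬ γ ⊆ S := fun h => hγ (Finset.mem_powerset.mpr h)
      simp [this]
  have h2 : (∑ γ ∈ S.powerset, if γ.Nonempty then ((-1 : ℤ) ^ γ.card) else 0)
      = (∑ γ ∈ S.powerset, ((-1 : ℤ) ^ γ.card)) - 1 := by
    have : ∀ γ ∈ S.powerset,
        (if γ.Nonempty then ((-1 : ℤ) ^ γ.card) else 0)
          = ((-1 : ℤ) ^ γ.card) - (if γ = ∅ then 1 else 0) := by
      intro γ _
      by_cases h : γ = ∅
      · simp [h, Finset.not_nonempty_empty]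
      · simp [h, Finset.nonempty_iff_ne_empty.mpr h]
    rw [Finset.sum_congr rfl this, Finset.sum_sub_distrib]
    congr 1
    rw [Finset.sum_ite_eq' S.powerset (∅ : Finset α) (fun _ => (1 : ℤ))]
    simp
  have hParS : Par I c c₀ ↔ S = ∅ := by
    constructor
    · intro hp
      ext a
      simp only [hS, Finset.mem_filter, Finset.notMem_empty, iff_false]
      rintro ⟨hac, x, hx, hnx⟩
      exact hnx (hsymm a x (hp a hac x hx))
    · intro hSe a ha b hb
      by_contra hni
      have : a ∈ S := Finset.mem_filter.mpr ⟨ha, b, hb, fun h => hni (hsymm b a h)⟩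
      simp [hSe] at this
  rw [h1, h2, Finset.sum_powerset_neg_one_pow_card]
  by_cases hp : Par I c c₀
  · simp [hp, hParS.mp hp]
  · have : S ≠ ∅ := fun h => hp (hParS.mpr h)
    simp [hp, this]
end

section
/- Graded Möbius inversion for trace monoids: let F : M → ℝ be any function on the trace monoid M = M(Σ, I), and define its graded Möbius transform H : M → ℝ by H(u) = Σ_{c' clique, c' ≥ c} (-1)^{|c'|-|c|} F(v·c'), where u = v·c with c the last clique of the Cartier-Foata decomposition of u (and H(0) = Σ_{c clique} (-1)^{|c|} F(c)). Then for every u ∈ M, F(u) = Σ_{x ∈ M(u)} H(x), where M(u) = {x ∈ M : τ(x) = τ(u) and u ≤ x} for u ≠ 0, and M(0) is the set of cliques. -/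
open scoped Classical

/-- The commutation relation `ab = ba` for `(a,b) ∈ I`, generating the trace
monoid congruence on the free monoid. -/
def traceRel {α : Type*} (I : α → α → Prop) : FreeMonoid α → FreeMonoid α → Prop :=
  fun x y => ∃ a b, I a b ∧ x = FreeMonoid.of a * FreeMonoid.of b ∧
    y = FreeMonoid.of b * FreeMonoid.of a

/-- The trace monoid `M(Σ, I) = Σ* / R`. -/
abbrev TM {α : Type*} (I : α → α → Prop) := Con.Quotient (conGen (traceRel I))

/-- Canonical projection from the free monoid onto the trace monoid. -/
def mkTM {α : Type*} (I : α → α → Prop) : FreeMonoid α →* TM I := Con.mk' _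

/-- The image of a letter in the trace monoid. -/
def emb {α : Type*} (I : α → α → Prop) (a : α) : TM I := mkTM I (FreeMonoid.of a)

/-- The trace associated to a clique (product of its letters in some enumeration). -/
noncomputable def ctr {α : Type*} (I : α → α → Prop) (c : Finset α) : TM I :=
  mkTM I ((c.toList.map FreeMonoid.of).prod)

/-- The prefix (left divisibility) order on traces: `u ≤ v ↔ ∃ w, v = u·w`. -/
def pref {α : Type*} (I : α → α → Prop) (u v : TM I) : Prop := ∃ w, v = u * w

/-!
Let `u = c₁⋯cₙ` be in Cartier–Foata form. The traces `x` of height `n` with `u ≤ x` are exactly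
those with Cartier–Foata decomposition `(c₁ ∪ e₁)⋯(cₙ ∪ eₙ)`, where each `eᵢ` commutes with
`cᵢ₊₁, …, cₙ` and, for `i > 1`, consists of letters depending on `cᵢ₋₁ ∪ eᵢ₋₁`. To see that `M(u)`
is of this form, append the letters of `w` in `x = u·w` one at a time: a letter `b` joins the
earliest clique from which on every clique commutes with `b`, or else opens a new clique, which
would raise the height.

In `∑_{x ∈ M(u)} H(x)` the sum over `eₙ` and the alternating sum over the cliques `c' ⊇ cₙ ∪ eₙ`
in `H` combine into an inclusion–exclusion over subsets of `c' \ cₙ`: only the `c'` whose new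
letters all commute with `cₙ₋₁ ∪ eₙ₋₁` survive, and those letters can be moved into that clique,
giving a sum of the same shape over `e₁, …, eₙ₋₁`. At the first clique no letter survives, which
leaves `F(u)`. For `u = 1` this is Möbius inversion on the lattice of cliques.
-/

open Finset
open scoped Function

namespace TraceMonoid

variable {α : Type*} {I : α → α → Prop}

lemma emb_commute {a b : α} (h : I a b) : Commute (emb I a) (emb I b) := by
  show mkTM I (FreeMonoid.of a) * mkTM I (FreeMonoid.of b)
      = mkTM I (FreeMonoid.of b) * mkTM I (FreeMonoid.of a)
  rw [← map_mul, ← map_mul]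
  exact (Con.eq _).mpr (ConGen.Rel.of _ _ ⟨a, b, h, rfl, rfl⟩)

lemma isCliq_mono {c d : Finset α} (hd : IsCliq I d) (h : c ⊆ d) : IsCliq I c :=
  fun a ha b hb hab => hd a (h ha) b (h hb) hab

lemma pairwise_commute_of_isCliq {c : Finset α} (hc : IsCliq I c) :
    (c : Set α).Pairwise (Commute on (emb I)) :=
  fun a ha b hb hab => emb_commute (hc a ha b hb hab)

lemma ctr_eq_list_prod (c : Finset α) : ctr I c = (c.toList.map (emb I)).prod := by
  rw [ctr, map_list_prod, List.map_map]; rfl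

lemma ctr_eq_noncommProd {c : Finset α} (hc : IsCliq I c) :
    ctr I c = c.noncommProd (emb I) (pairwise_commute_of_isCliq hc) := by
  rw [ctr_eq_list_prod, ← noncommProd_toFinset _ _ (by simpa using pairwise_commute_of_isCliq hc)
    c.nodup_toList]
  simp only [toList_toFinset]

@[simp] lemma ctr_empty : ctr I (∅ : Finset α) = 1 := by simp [ctr_eq_list_prod]

@[simp] lemma ctr_singleton (a : α) : ctr I {a} = emb I a := by simp [ctr_eq_list_prod]

lemma ctr_insert {a : α} {c : Finset α} (ha : a ∉ c) (hc : IsCliq I (insert a c)) :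
    ctr I (insert a c) = emb I a * ctr I c := by
  rw [ctr_eq_noncommProd hc, noncommProd_insert_of_notMem _ _ _ _ ha,
    ctr_eq_noncommProd (isCliq_mono hc (subset_insert a c))]

lemma ctr_union {s t : Finset α} (h : Disjoint s t) (hc : IsCliq I (s ∪ t)) :
    ctr I (s ∪ t) = ctr I s * ctr I t := by
  rw [ctr_eq_noncommProd hc, noncommProd_union_of_disjoint h,
    ctr_eq_noncommProd (isCliq_mono hc subset_union_left),
    ctr_eq_noncommProd (isCliq_mono hc subset_union_right)]

lemma commute_emb_ctr {b : α} {c : Finset α} (h : ∀ a ∈ c, I a b) :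
    Commute (emb I b) (ctr I c) := by
  rw [ctr_eq_list_prod]
  refine Commute.list_prod_right _ _ fun x hx => ?_
  obtain ⟨a, ha, rfl⟩ := List.mem_map.mp hx
  exact (emb_commute (h a (mem_toList.mp ha))).symm

lemma commute_ctr_of_par {s t : Finset α} (h : Par I s t) : Commute (ctr I s) (ctr I t) := by
  rw [ctr_eq_list_prod t]
  refine Commute.list_prod_right _ _ fun x hx => ?_
  obtain ⟨b, hb, rfl⟩ := List.mem_map.mp hx
  exact (commute_emb_ctr fun a ha => h a ha b (mem_toList.mp hb)).symm

lemma TM.induction_on {P : TM I → Prop} (z : TM I) (one : P 1)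
    (mul : ∀ b z, P z → P (emb I b * z)) : P z := by
  induction z using Con.induction_on with | _ w
  induction w using FreeMonoid.inductionOn' with
  | one => exact one
  | of_mul b w hw => exact mul b _ hw

lemma par_mono {s t s' t' : Finset α} (h : Par I s t) (hs : s' ⊆ s) (ht : t' ⊆ t) :
    Par I s' t' := fun a ha b hb => h a (hs ha) b (ht hb)

lemma par_union_left {s s' t : Finset α} : Par I (s ∪ s') t ↔ Par I s t ∧ Par I s' t := by
  simp only [Par, mem_union]
  grind

lemma par_union_right {s t t' : Finset α} : Par I s (t ∪ t') ↔ Par I s t ∧ Par I s t' := by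
  simp only [Par, mem_union]
  grind

@[simp] lemma mem_foldr_union {a : α} {l : List (Finset α)} :
    a ∈ l.foldr (· ∪ ·) ∅ ↔ ∃ t ∈ l, a ∈ t := by
  induction l with
  | nil => simp
  | cons t l ih => simp [ih]

lemma foldr_union_subset_of_forall₂ {l l' : List (Finset α)}
    (h : List.Forall₂ (· ⊆ ·) l l') : l.foldr (· ∪ ·) ∅ ⊆ l'.foldr (· ∪ ·) ∅ := by
  induction h with
  | nil => rfl
  | cons h _ ih => exact union_subset_union h ih

lemma par_foldr_union {s : Finset α} {l : List (Finset α)} :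
    Par I s (l.foldr (· ∪ ·) ∅) ↔ ∀ t ∈ l, Par I s t := by
  induction l with
  | nil => simp [Par]
  | cons t l ih => simp [par_union_right, ih]

lemma disjoint_of_par (hirr : ∀ a, ¬ I a a) {s t : Finset α} (h : Par I s t) : Disjoint s t :=
  disjoint_left.mpr fun a ha hat => hirr a (h a ha a hat)

lemma par_of_isCliq_union {s t : Finset α} (hst : Disjoint s t) (h : IsCliq I (s ∪ t)) :
    Par I s t :=
  fun a ha b hb => h a (mem_union_left _ ha) b (mem_union_right _ hb)
    fun hab => disjoint_left.mp hst ha (hab ▸ hb)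

lemma par_swap (hsymm : ∀ a b, I a b → I b a) {s t : Finset α} (h : Par I s t) :
    Par I t s := fun a ha b hb => hsymm _ _ (h b hb a ha)

lemma isCliq_union (hsymm : ∀ a b, I a b → I b a) {s t : Finset α}
    (hs : IsCliq I s) (ht : IsCliq I t) (hst : Par I s t) : IsCliq I (s ∪ t) := by
  intro a ha b hb hab
  rcases mem_union.mp ha with ha | ha <;> rcases mem_union.mp hb with hb | hb
  · exact hs a ha b hb hab
  · exact hst a ha b hb
  · exact hsymm _ _ (hst b hb a ha)
  · exact ht a ha b hb hab

lemma isCliq_insert (hsymm : ∀ a b, I a b → I b a) {g : Finset α} {b : α} (hg : IsCliq I g)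
    (hb : ∀ a ∈ g, I a b) : IsCliq I (insert b g) := by
  rw [insert_eq]
  refine isCliq_union hsymm ?_ hg fun x hx a ha => ?_
  · simp [IsCliq]
  · rw [mem_singleton.mp hx]; exact hsymm _ _ (hb a ha)

lemma sum_powerset_neg_one_pow_card_eq {S : Type*} [Ring S] (t : Finset α) :
    ∑ e ∈ t.powerset, (-1 : S) ^ #e = if t = ∅ then 1 else 0 := by
  have := congrArg (Int.cast : ℤ → S) (sum_powerset_neg_one_pow_card (x := t))
  push_cast at this
  exact this

variable (I) in
def IsCFList (l : List (Finset α)) : Prop :=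
  (∀ c ∈ l, c.Nonempty ∧ IsCliq I c) ∧ l.IsChain (CFadm I)

variable (I) in
def IsCFNormalForm (cf : TM I → List (Finset α)) : Prop :=
  ∀ u l, cf u = l ↔ IsCFList I l ∧ (l.map (ctr I)).prod = u

variable {cf : TM I → List (Finset α)} {R : Type*} [CommRing R]

lemma isCFList_cf (hcf : IsCFNormalForm I cf) (u : TM I) : IsCFList I (cf u) :=
  ((hcf u _).mp rfl).1

lemma prod_cf (hcf : IsCFNormalForm I cf) (u : TM I) : ((cf u).map (ctr I)).prod = u :=
  ((hcf u _).mp rfl).2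

noncomputable def insertLetter (b : α) : List (Finset α) → List (Finset α)
  | [] => [{b}]
  | g :: l => insert b g :: l

lemma prod_insertLetter (hsymm : ∀ a b, I a b → I b a) (hirr : ∀ a, ¬ I a a)
    {l : List (Finset α)} {b : α} (hl : ∀ t ∈ l, IsCliq I t) (hb : ∀ t ∈ l, ∀ a ∈ t, I a b) :
    ((insertLetter b l).map (ctr I)).prod = (l.map (ctr I)).prod * emb I b := by
  cases l with
  | nil => simp [insertLetter]
  | cons g l =>
    have hbg : ∀ a ∈ g, I a b := hb g List.mem_cons_self
    have hcomm : Commute (emb I b) (l.map (ctr I)).prod :=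
      Commute.list_prod_right _ _ fun x hx => by
        obtain ⟨t, ht, rfl⟩ := List.mem_map.mp hx
        exact commute_emb_ctr (hb t (List.mem_cons_of_mem g ht))
    simp only [insertLetter, List.map_cons, List.prod_cons,
      ctr_insert (fun h => hirr b (hbg b h)) (isCliq_insert hsymm (hl g List.mem_cons_self) hbg)]
    rw [(commute_emb_ctr hbg).eq, mul_assoc, hcomm.eq, mul_assoc]

variable [Fintype α]

variable (I) in
noncomputable def dependents (d : Finset α) : Finset α := univ.filter fun b => ∃ a ∈ d, ¬ I a b

@[simp] lemma mem_dependents {d : Finset α} {b : α} :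
    b ∈ dependents I d ↔ ∃ a ∈ d, ¬ I a b := by simp [dependents]

lemma cfadm_iff_subset_dependents {c d : Finset α} : CFadm I d c ↔ c ⊆ dependents I d := by
  simp [CFadm, subset_iff]

lemma dependents_mono {d d' : Finset α} (h : d ⊆ d') : dependents I d ⊆ dependents I d' := by
  intro b
  simp only [mem_dependents]
  exact fun ⟨a, ha, hab⟩ => ⟨a, h ha, hab⟩

lemma subset_compl_dependents {d r : Finset α} : r ⊆ (dependents I d)ᶜ ↔ Par I d r := by
  simp only [subset_iff, mem_compl, mem_dependents, Par]
  grind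

variable (I) in
noncomputable def cliqueExts (A c K : Finset α) : Finset (Finset α) :=
  univ.filter fun e => e ⊆ A ∧ Disjoint c e ∧ IsCliq I (c ∪ e) ∧ Par I e K

@[simp] lemma mem_cliqueExts {A c K e : Finset α} :
    e ∈ cliqueExts I A c K ↔ e ⊆ A ∧ Disjoint c e ∧ IsCliq I (c ∪ e) ∧ Par I e K := by
  simp [cliqueExts]

lemma cliqueExts_empty {c K : Finset α} (hc : IsCliq I c) : cliqueExts I ∅ c K = {∅} := by
  ext e
  simp only [mem_cliqueExts, subset_empty, mem_singleton]
  constructor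
  · exact fun h => h.1
  · rintro rfl
    simpa [Par] using hc

lemma cliqueExts_compl_dependents (hsymm : ∀ a b, I a b → I b a) (hirr : ∀ a, ¬ I a a)
    {c d L : Finset α} (hd : IsCliq I d) (hc : IsCliq I c) :
    cliqueExts I (dependents I d)ᶜ c L = cliqueExts I univ d (c ∪ L) := by
  ext r
  simp only [mem_cliqueExts, subset_compl_dependents, subset_univ, true_and, par_union_right]
  constructor
  · rintro ⟨hdr, hcr, hcr', hrL⟩
    have hr := isCliq_mono hcr' subset_union_right
    exact ⟨disjoint_of_par hirr hdr, isCliq_union hsymm hd hr hdr,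
      par_swap hsymm (par_of_isCliq_union hcr hcr'), hrL⟩
  · rintro ⟨hdr, hdr', hrc, hrL⟩
    have hr := isCliq_mono hdr' subset_union_right
    exact ⟨par_of_isCliq_union hdr hdr', (disjoint_of_par hirr hrc).symm,
      isCliq_union hsymm hc hr (par_swap hsymm hrc), hrL⟩

lemma sum_cliqueExts_union_eq_sum_filter {B c K e : Finset α} (he : e ∈ cliqueExts I B c K)
    (f : Finset α → R) :
    ∑ r ∈ cliqueExts I univ (c ∪ e) K, (-1) ^ #r * f (c ∪ e ∪ r)
      = ∑ s ∈ (cliqueExts I univ c K).filter (e ⊆ ·), (-1) ^ #e * ((-1) ^ #s * f (c ∪ s)) := by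
  rw [mem_cliqueExts] at he
  obtain ⟨-, hce, -, heK⟩ := he
  refine sum_nbij' (e ∪ ·) (· \ e) ?_ ?_ ?_ ?_ ?_
  · intro r hr
    simp only [mem_filter, mem_cliqueExts, subset_univ, true_and, disjoint_union_left,
      disjoint_union_right, par_union_left, ← union_assoc] at hr ⊢
    exact ⟨⟨⟨hce, hr.1.1⟩, hr.2.1, heK, hr.2.2⟩, subset_union_left⟩
  · intro s hs
    simp only [mem_filter, mem_cliqueExts, subset_univ, true_and, disjoint_union_left] at hs ⊢
    rw [union_assoc, union_sdiff_of_subset hs.2]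
    exact ⟨⟨hs.1.1.mono_right sdiff_subset, disjoint_sdiff⟩, hs.1.2.1,
      par_mono hs.1.2.2 sdiff_subset subset_rfl⟩
  · intro r hr
    simp only [mem_cliqueExts, disjoint_union_left] at hr
    exact union_sdiff_cancel_left hr.2.1.2
  · intro s hs
    exact union_sdiff_of_subset (mem_filter.mp hs).2
  · intro r hr
    simp only [mem_cliqueExts, disjoint_union_left] at hr
    rw [card_union_of_disjoint hr.2.1.2, pow_add, ← mul_assoc, ← mul_assoc, ← pow_add,
      ← two_mul, pow_mul, neg_one_sq, one_pow, one_mul, union_assoc]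

/-- Inclusion–exclusion over the letters of `B`: only the extensions avoiding `B` survive. -/
theorem sum_cliqueExts_sum_cliqueExts (B c K : Finset α) (f : Finset α → R) :
    ∑ e ∈ cliqueExts I B c K, ∑ r ∈ cliqueExts I univ (c ∪ e) K, (-1) ^ #r * f (c ∪ e ∪ r)
      = ∑ s ∈ cliqueExts I Bᶜ c K, (-1) ^ #s * f (c ∪ s) := by
  rw [sum_congr rfl fun e he => sum_cliqueExts_union_eq_sum_filter he f,
    sum_comm' (t' := cliqueExts I univ c K) (s' := fun s => (s ∩ B).powerset)]
  · simp only [← sum_mul, sum_powerset_neg_one_pow_card_eq, ite_mul, one_mul, zero_mul]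
    rw [← sum_filter]
    congr 1
    ext s
    simp only [mem_filter, mem_cliqueExts, subset_univ, true_and,
      subset_compl_iff_disjoint_right, disjoint_iff_inter_eq_empty]
    tauto
  · intro e s
    simp only [mem_filter, mem_cliqueExts, subset_univ, true_and, mem_powerset, subset_inter_iff]
    constructor
    · rintro ⟨⟨heB, -⟩, hs, hes⟩
      exact ⟨⟨hes, heB⟩, hs⟩
    · rintro ⟨⟨hes, heB⟩, hcs, hcs', hsK⟩
      exact ⟨⟨heB, hcs.mono_right hes, isCliq_mono hcs' (union_subset_union_right hes),
        par_mono hsK hes subset_rfl⟩, ⟨hcs, hcs', hsK⟩, hes⟩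

lemma sum_supset_eq_sum_cliqueExts (d : Finset α) (g : Finset α → R) :
    ∑ c', (if IsCliq I c' ∧ d ⊆ c' then (-1) ^ (#c' - #d) * g c' else 0)
      = ∑ r ∈ cliqueExts I univ d ∅, (-1) ^ #r * g (d ∪ r) := by
  rw [← sum_filter]
  refine sum_nbij' (· \ d) (d ∪ ·) ?_ ?_ ?_ ?_ ?_
  · intro c' hc'
    obtain ⟨hc', hdc'⟩ := (mem_filter.mp hc').2
    simpa [union_sdiff_of_subset hdc', disjoint_sdiff, Par] using hc'
  · intro r hr
    simp only [mem_cliqueExts] at hr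
    simpa using hr.2.2.1
  · intro c' hc'
    exact union_sdiff_of_subset (mem_filter.mp hc').2.2
  · intro r hr
    exact union_sdiff_cancel_left (mem_cliqueExts.mp hr).2.1
  · intro c' hc'
    rw [union_sdiff_of_subset (mem_filter.mp hc').2.2, card_sdiff_of_subset (mem_filter.mp hc').2.2]

lemma exists_split_commuting_suffix (l : List (Finset α)) (b : α) :
    ∃ l₁ l₂, l = l₁ ++ l₂ ∧ (∀ t ∈ l₂, ∀ a ∈ t, I a b) ∧
      ∀ d ∈ l₁.getLast?, b ∈ dependents I d := by
  induction l using List.reverseRecOn with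
  | nil => exact ⟨[], [], rfl, by simp, by simp⟩
  | append_singleton l g ih =>
    by_cases hb : b ∈ dependents I g
    · exact ⟨l ++ [g], [], by simp, by simp, by simpa using hb⟩
    · obtain ⟨l₁, l₂, rfl, h₂, h₁⟩ := ih
      refine ⟨l₁, l₂ ++ [g], by simp, ?_, h₁⟩
      simp only [mem_dependents, not_exists, not_and, not_not] at hb
      simp only [List.mem_append, List.mem_singleton]
      rintro t (ht | rfl) a ha
      · exact h₂ t ht a ha
      · exact hb a ha

lemma isCFList_append_insertLetter (hsymm : ∀ a b, I a b → I b a)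
    {l₁ l₂ : List (Finset α)} {b : α} (hl : IsCFList I (l₁ ++ l₂))
    (h₂ : ∀ t ∈ l₂, ∀ a ∈ t, I a b) (h₁ : ∀ d ∈ l₁.getLast?, b ∈ dependents I d) :
    IsCFList I (l₁ ++ insertLetter b l₂) := by
  obtain ⟨hcl, hch⟩ := hl
  obtain ⟨hch₁, hch₂, hlink⟩ := List.isChain_append.mp hch
  refine ⟨?_, List.isChain_append.mpr ⟨hch₁, ?_, ?_⟩⟩
  · intro t ht
    rcases List.mem_append.mp ht with ht | ht
    · exact hcl t (List.mem_append_left _ ht)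
    cases l₂ with
    | nil =>
      obtain rfl := List.mem_singleton.mp ht
      exact ⟨singleton_nonempty b, by simp [IsCliq]⟩
    | cons g l₂ =>
      rcases List.mem_cons.mp ht with rfl | ht
      · exact ⟨insert_nonempty _ _, isCliq_insert hsymm (hcl g (by simp)).2 (h₂ g (by simp))⟩
      · exact hcl t (by simp [ht])
  · cases l₂ with
    | nil => simp [insertLetter]
    | cons g l₂ =>
      refine List.isChain_cons.mpr ⟨fun y hy => ?_, (List.isChain_cons.mp hch₂).2⟩
      exact cfadm_iff_subset_dependents.mpr
        ((cfadm_iff_subset_dependents.mp ((List.isChain_cons.mp hch₂).1 y hy)).trans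
          (dependents_mono (subset_insert b g)))
  · intro d hd y hy
    rw [cfadm_iff_subset_dependents]
    cases l₂ with
    | nil =>
      obtain rfl : {b} = y := by simpa [insertLetter] using hy
      simpa using h₁ d hd
    | cons g l₂ =>
      obtain rfl : insert b g = y := by simpa [insertLetter] using hy
      exact insert_subset (h₁ d hd) (cfadm_iff_subset_dependents.mp (hlink d hd g rfl))

variable (I) in
/-- For `cs = [c₁, …, cₙ]`, the lists `[c₁ ∪ e₁, …, cₙ ∪ eₙ]` in which each `eᵢ` commutes with
`cᵢ₊₁ ∪ … ∪ cₙ` and consists of letters depending on `cᵢ₋₁ ∪ eᵢ₋₁` (of `B` if `i = 1`).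
For `B = univ` and `cs` a Cartier–Foata list these are the decompositions of the traces of the
same height having `c₁⋯cₙ` as a prefix. -/
noncomputable def cfExts (B : Finset α) : List (Finset α) → Finset (List (Finset α))
  | [] => {[]}
  | c :: cs => (cliqueExts I B c (cs.foldr (· ∪ ·) ∅)).biUnion fun e =>
      (cfExts (dependents I (c ∪ e)) cs).image (List.cons (c ∪ e))

@[simp] lemma cfExts_nil (B : Finset α) : cfExts I B [] = {[]} := rfl

lemma mem_cfExts_cons {B c : Finset α} {cs d : List (Finset α)} :
    d ∈ cfExts I B (c :: cs) ↔ ∃ e ∈ cliqueExts I B c (cs.foldr (· ∪ ·) ∅),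
      ∃ d' ∈ cfExts I (dependents I (c ∪ e)) cs, (c ∪ e) :: d' = d := by
  simp only [cfExts, mem_biUnion, mem_image]

lemma forall₂_subset_of_mem_cfExts {B : Finset α} {cs d : List (Finset α)}
    (h : d ∈ cfExts I B cs) : List.Forall₂ (· ⊆ ·) cs d := by
  induction cs generalizing B d with
  | nil => simp_all
  | cons c cs ih =>
    obtain ⟨e, -, d', hd', rfl⟩ := mem_cfExts_cons.mp h
    exact List.Forall₂.cons subset_union_left (ih hd')

lemma exists_prod_eq_mul_of_mem_cfExts {B : Finset α} {cs d : List (Finset α)}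
    (h : d ∈ cfExts I B cs) : ∃ w, (d.map (ctr I)).prod = (cs.map (ctr I)).prod * w := by
  induction cs generalizing B d with
  | nil => simp_all
  | cons c cs ih =>
    obtain ⟨e, he, d', hd', rfl⟩ := mem_cfExts_cons.mp h
    obtain ⟨-, hce, hce', heL⟩ := mem_cliqueExts.mp he
    obtain ⟨w, hw⟩ := ih hd'
    have hcomm : Commute (ctr I e) (cs.map (ctr I)).prod :=
      Commute.list_prod_right _ _ fun x hx => by
        obtain ⟨t, ht, rfl⟩ := List.mem_map.mp hx
        exact commute_ctr_of_par (par_foldr_union.mp heL t ht)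
    refine ⟨ctr I e * w, ?_⟩
    simp only [List.map_cons, List.prod_cons, hw, ctr_union hce hce', ← mul_assoc]
    rw [mul_assoc (ctr I c), hcomm.eq, ← mul_assoc]

lemma isCFList_of_mem_cfExts {B : Finset α} {cs d : List (Finset α)} (hcs : IsCFList I cs)
    (h : d ∈ cfExts I B cs) : IsCFList I d := by
  induction cs generalizing B d with
  | nil => simp_all
  | cons c cs ih =>
    obtain ⟨e, he, d', hd', rfl⟩ := mem_cfExts_cons.mp h
    obtain ⟨hcl, hch⟩ := hcs
    obtain ⟨hd'cl, hd'ch⟩ := ih ⟨fun t ht => hcl t (List.mem_cons_of_mem c ht),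
      (List.isChain_cons.mp hch).2⟩ hd'
    refine ⟨?_, List.isChain_cons.mpr ⟨?_, hd'ch⟩⟩
    · simp only [List.mem_cons, forall_eq_or_imp]
      exact ⟨⟨(hcl c List.mem_cons_self).1.mono subset_union_left,
        (mem_cliqueExts.mp he).2.2.1⟩, hd'cl⟩
    · cases cs with
      | nil => simp_all
      | cons c₂ cs =>
        obtain ⟨e₂, he₂, d'', -, rfl⟩ := mem_cfExts_cons.mp hd'
        rintro _ ⟨⟩
        rw [cfadm_iff_subset_dependents]
        refine union_subset ?_ (mem_cliqueExts.mp he₂).1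
        exact (cfadm_iff_subset_dependents.mp (List.isChain_cons_cons.mp hch).1).trans
          (dependents_mono subset_union_left)

lemma self_mem_cfExts {B : Finset α} {cs : List (Finset α)} (hcs : ∀ c ∈ cs, IsCliq I c) :
    cs ∈ cfExts I B cs := by
  induction cs generalizing B with
  | nil => simp
  | cons c cs ih =>
    refine mem_cfExts_cons.mpr ⟨∅, ?_, cs, ?_, by simp⟩
    · simpa [Par] using hcs c List.mem_cons_self
    · simpa using ih fun t ht => hcs t (List.mem_cons_of_mem c ht)

lemma cfExts_mono {B B' : Finset α} (h : B ⊆ B') (cs : List (Finset α)) :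
    cfExts I B cs ⊆ cfExts I B' cs := by
  cases cs with
  | nil => rfl
  | cons c cs =>
    refine biUnion_subset_biUnion_of_subset_left _ fun e he => ?_
    rw [mem_cliqueExts] at he ⊢
    exact ⟨he.1.trans h, he.2⟩

lemma append_insert_mem_cfExts (hsymm : ∀ a b, I a b → I b a) (hirr : ∀ a, ¬ I a a)
    {B g : Finset α} {b : α} {l₁ l₂ cs : List (Finset α)}
    (h : l₁ ++ g :: l₂ ∈ cfExts I B cs) (hb : ∀ t ∈ g :: l₂, ∀ a ∈ t, I a b)
    (hdep : b ∈ (l₁.map (dependents I)).getLastD B) :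
    l₁ ++ insert b g :: l₂ ∈ cfExts I B cs := by
  induction l₁ generalizing B cs with
  | nil =>
    cases cs with
    | nil => simp at h
    | cons c cs =>
      obtain ⟨e, he, l₂', hl₂, hgl⟩ := mem_cfExts_cons.mp h
      obtain ⟨rfl, rfl⟩ := List.cons.inj hgl
      obtain ⟨heB, hce, hce', heL⟩ := mem_cliqueExts.mp he
      have hbg := hb _ List.mem_cons_self
      have hbL : ∀ a ∈ cs.foldr (· ∪ ·) ∅, I b a := by
        intro a ha
        obtain ⟨t, ht, hat⟩ := mem_foldr_union.mp
          (foldr_union_subset_of_forall₂ (forall₂_subset_of_mem_cfExts hl₂) ha)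
        exact hsymm _ _ (hb t (List.mem_cons_of_mem _ ht) a hat)
      refine mem_cfExts_cons.mpr ⟨insert b e, ?_, l₂', ?_, by simp [union_insert]⟩
      · refine mem_cliqueExts.mpr ⟨insert_subset (by simpa using hdep) heB, ?_, ?_, ?_⟩
        · exact disjoint_insert_right.mpr
            ⟨fun hbc => hirr b (hbg b (mem_union_left _ hbc)), hce⟩
        · rw [union_insert]
          exact isCliq_insert hsymm hce' hbg
        · intro a ha x hx
          rcases mem_insert.mp ha with rfl | ha
          · exact hbL x hx
          · exact heL a ha x hx
      · rw [union_insert]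
        exact cfExts_mono (dependents_mono (subset_insert _ _)) _ hl₂
  | cons d l₁ ih =>
    cases cs with
    | nil => simp at h
    | cons c cs =>
      obtain ⟨e, he, l', hl', hdl⟩ := mem_cfExts_cons.mp h
      obtain ⟨rfl, rfl⟩ := List.cons.inj hdl
      rw [List.map_cons, List.getLastD_cons] at hdep
      exact mem_cfExts_cons.mpr ⟨e, he, _, ih hl' hdep, rfl⟩

variable (I) in
/-- The graded Möbius transform of `F (p * ·)` at the trace whose Cartier–Foata list is `d`. -/
noncomputable def gradedTransform (F : TM I → R) (p : TM I) : List (Finset α) → R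
  | [] => 0
  | [c] => ∑ r ∈ cliqueExts I univ c ∅, (-1) ^ #r * F (p * ctr I (c ∪ r))
  | c :: c' :: l => gradedTransform F (p * ctr I c) (c' :: l)

lemma gradedTransform_append_singleton (F : TM I → R) (l : List (Finset α)) (p : TM I)
    (c : Finset α) : gradedTransform I F p (l ++ [c])
      = ∑ r ∈ cliqueExts I univ c ∅, (-1) ^ #r * F (p * (l.map (ctr I)).prod * ctr I (c ∪ r)) := by
  induction l generalizing p with
  | nil => simp [gradedTransform]
  | cons d l ih =>
    cases l with
    | nil => simp [gradedTransform, mul_assoc]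
    | cons d' l =>
      rw [List.cons_append, List.cons_append, gradedTransform, ← List.cons_append, ih]
      simp [mul_assoc]

lemma sum_cfExts_cons (G : List (Finset α) → R) (B c : Finset α) (cs : List (Finset α)) :
    ∑ d ∈ cfExts I B (c :: cs), G d = ∑ e ∈ cliqueExts I B c (cs.foldr (· ∪ ·) ∅),
      ∑ d' ∈ cfExts I (dependents I (c ∪ e)) cs, G ((c ∪ e) :: d') := by
  rw [cfExts, sum_biUnion]
  · exact sum_congr rfl fun e _ => sum_image fun _ _ _ _ h => List.cons_injective h
  · intro e₁ he₁ e₂ he₂ hne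
    refine disjoint_left.mpr fun d hd₁ hd₂ => hne ?_
    obtain ⟨_, -, rfl⟩ := mem_image.mp hd₁
    obtain ⟨_, -, h⟩ := mem_image.mp hd₂
    have hunion := (List.cons.inj h).1
    rw [← union_sdiff_cancel_left (mem_cliqueExts.mp he₁).2.1,
      ← union_sdiff_cancel_left (mem_cliqueExts.mp he₂).2.1, hunion]

lemma ctr_mul_ctr_union (hsymm : ∀ a b, I a b → I b a) (hirr : ∀ a, ¬ I a a)
    {c d r L : Finset α} (hc : IsCliq I c) (hr : r ∈ cliqueExts I univ d (c ∪ L)) :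
    ctr I d * ctr I (c ∪ r) = ctr I (d ∪ r) * ctr I c := by
  obtain ⟨-, hdr, hdr', hrcL⟩ := mem_cliqueExts.mp hr
  have hrc := (par_union_right.mp hrcL).1
  have hr := isCliq_mono hdr' subset_union_right
  rw [union_comm c, ctr_union (disjoint_of_par hirr hrc) (isCliq_union hsymm hr hc hrc),
    ← mul_assoc, ← ctr_union hdr hdr']

theorem sum_cfExts_gradedTransform (hsymm : ∀ a b, I a b → I b a) (hirr : ∀ a, ¬ I a a)
    (F : TM I → R) (B : Finset α) (p : TM I) (c : Finset α) (cs : List (Finset α))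
    (hcs : ∀ t ∈ c :: cs, IsCliq I t) :
    ∑ d ∈ cfExts I B (c :: cs), gradedTransform I F p d
      = ∑ s ∈ cliqueExts I Bᶜ c (cs.foldr (· ∪ ·) ∅),
          (-1) ^ #s * F (p * ctr I (c ∪ s) * (cs.map (ctr I)).prod) := by
  rw [sum_cfExts_cons]
  induction cs generalizing B p c with
  | nil =>
    simpa [gradedTransform] using sum_cliqueExts_sum_cliqueExts B c ∅ fun s => F (p * ctr I s)
  | cons c₂ cs ih =>
    have hc₂ := hcs c₂ (by simp)
    rw [← sum_cliqueExts_sum_cliqueExts B c _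
      fun s => F (p * ctr I s * ((c₂ :: cs).map (ctr I)).prod)]
    refine sum_congr rfl fun e he => ?_
    have hce := (mem_cliqueExts.mp he).2.2.1
    have hstep : ∀ d' ∈ cfExts I (dependents I (c ∪ e)) (c₂ :: cs),
        gradedTransform I F p ((c ∪ e) :: d') = gradedTransform I F (p * ctr I (c ∪ e)) d' := by
      intro d' hd'
      obtain ⟨_, -, _, -, rfl⟩ := mem_cfExts_cons.mp hd'
      rfl
    rw [sum_congr rfl hstep, sum_cfExts_cons, ih _ _ _ fun t ht => hcs t (by simp_all),
      cliqueExts_compl_dependents hsymm hirr hce hc₂, List.foldr_cons]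
    refine sum_congr rfl fun r hr => ?_
    rw [mul_assoc p, ctr_mul_ctr_union hsymm hirr hc₂ hr]
    simp [mul_assoc]

lemma cf_mul_emb (hsymm : ∀ a b, I a b → I b a) (hirr : ∀ a, ¬ I a a)
    (hcf : IsCFNormalForm I cf) (y : TM I) (b : α) :
    ∃ l₁ l₂, cf y = l₁ ++ l₂ ∧ cf (y * emb I b) = l₁ ++ insertLetter b l₂ ∧
      (∀ t ∈ l₂, ∀ a ∈ t, I a b) ∧ ∀ d ∈ l₁.getLast?, b ∈ dependents I d := by
  obtain ⟨l₁, l₂, hy, h₂, h₁⟩ := exists_split_commuting_suffix (cf y) b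
  have hl := isCFList_cf hcf y
  rw [hy] at hl
  refine ⟨l₁, l₂, hy, (hcf _ _).mpr ⟨isCFList_append_insertLetter hsymm hl h₂ h₁, ?_⟩, h₂, h₁⟩
  rw [List.map_append, List.prod_append,
    prod_insertLetter hsymm hirr (fun t ht => (hl.1 t (List.mem_append_right _ ht)).2) h₂,
    ← mul_assoc, ← List.prod_append, ← List.map_append, ← hy, prod_cf hcf]

lemma length_cf_le_mul (hsymm : ∀ a b, I a b → I b a) (hirr : ∀ a, ¬ I a a)
    (hcf : IsCFNormalForm I cf) (y z : TM I) : (cf y).length ≤ (cf (y * z)).length := by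
  induction z using TM.induction_on generalizing y with
  | one => simp
  | mul b z ih =>
    obtain ⟨l₁, l₂, hy, hyb, -⟩ := cf_mul_emb hsymm hirr hcf y b
    have : (cf y).length ≤ (cf (y * emb I b)).length := by
      cases l₂ <;> simp [hy, hyb, insertLetter]
    exact this.trans (by simpa [mul_assoc] using ih (y * emb I b))

lemma cf_mul_mem_cfExts (hsymm : ∀ a b, I a b → I b a) (hirr : ∀ a, ¬ I a a)
    (hcf : IsCFNormalForm I cf) {cs : List (Finset α)} {y z : TM I}
    (hy : cf y ∈ cfExts I univ cs) (hlen : (cf (y * z)).length = (cf y).length) :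
    cf (y * z) ∈ cfExts I univ cs := by
  induction z using TM.induction_on generalizing y with
  | one => simpa using hy
  | mul b z ih =>
    rw [← mul_assoc] at hlen ⊢
    have hyb : (cf (y * emb I b)).length = (cf y).length :=
      le_antisymm (hlen ▸ length_cf_le_mul hsymm hirr hcf _ z)
        (length_cf_le_mul hsymm hirr hcf y _)
    refine ih ?_ (hlen.trans hyb.symm)
    obtain ⟨l₁, l₂, hl, hlb, h₂, h₁⟩ := cf_mul_emb hsymm hirr hcf y b
    cases l₂ with
    | nil => simp [hl, hlb, insertLetter] at hyb
    | cons g l₂ =>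
      rw [hlb]
      rw [hl] at hy
      refine append_insert_mem_cfExts hsymm hirr hy h₂ ?_
      rw [List.getLastD_eq_getLast?, List.getLast?_map]
      cases h : l₁.getLast? <;> simp_all

lemma cf_prod_of_mem_cfExts (hcf : IsCFNormalForm I cf) {u : TM I} {B : Finset α}
    {d : List (Finset α)} (hd : d ∈ cfExts I B (cf u)) : cf (d.map (ctr I)).prod = d :=
  (hcf _ _).mpr ⟨isCFList_of_mem_cfExts (isCFList_cf hcf u) hd, rfl⟩

theorem setOf_length_cf_eq_pref_eq_image (hsymm : ∀ a b, I a b → I b a)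
    (hirr : ∀ a, ¬ I a a) (hcf : IsCFNormalForm I cf) (u : TM I) :
    {x | (cf x).length = (cf u).length ∧ pref I u x}
      = ((cfExts I univ (cf u)).image fun d => (d.map (ctr I)).prod : Set (TM I)) := by
  ext x
  simp only [Set.mem_ofPred_eq, coe_image, Set.mem_image, mem_coe]
  constructor
  · rintro ⟨hlen, w, rfl⟩
    refine ⟨cf (u * w), cf_mul_mem_cfExts hsymm hirr hcf ?_ hlen, prod_cf hcf _⟩
    exact self_mem_cfExts fun c hc => ((isCFList_cf hcf u).1 c hc).2
  · rintro ⟨d, hd, rfl⟩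
    obtain ⟨w, hw⟩ := exists_prod_eq_mul_of_mem_cfExts hd
    rw [cf_prod_of_mem_cfExts hcf hd, prod_cf hcf] at *
    exact ⟨(forall₂_subset_of_mem_cfExts hd).length_eq.symm, w, hw⟩

lemma sum_supset_getLast_eq_gradedTransform (F : TM I → R) {d : List (Finset α)}
    (hne : d ≠ []) :
    ∑ c', (if IsCliq I c' ∧ d.getLast hne ⊆ c' then
        (-1) ^ (#c' - #(d.getLast hne)) * F ((d.dropLast.map (ctr I)).prod * ctr I c') else 0)
      = gradedTransform I F 1 d := by
  obtain ⟨l, c, rfl⟩ := (List.eq_nil_or_concat d).resolve_left hne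
  simp only [List.concat_eq_append, List.getLast_append_singleton, List.dropLast_concat]
  rw [sum_supset_eq_sum_cliqueExts, gradedTransform_append_singleton, one_mul]

theorem sum_image_cfExts_eq (hsymm : ∀ a b, I a b → I b a) (hirr : ∀ a, ¬ I a a)
    (hcf : IsCFNormalForm I cf) (F H : TM I → R)
    (hH : ∀ x, cf x ≠ [] → H x = gradedTransform I F 1 (cf x)) {u : TM I} (hu : u ≠ 1) :
    ∑ x ∈ (cfExts I univ (cf u)).image (fun d => (d.map (ctr I)).prod), H x = F u := by
  rw [sum_image fun d₁ hd₁ d₂ hd₂ h => by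
    rw [← cf_prod_of_mem_cfExts hcf hd₁, ← cf_prod_of_mem_cfExts hcf hd₂]
    exact congrArg cf h]
  have hne : cf u ≠ [] := fun h => hu (by rw [← prod_cf hcf u, h]; rfl)
  obtain ⟨c, cs, hu'⟩ := List.exists_cons_of_ne_nil hne
  have hcs : ∀ t ∈ c :: cs, IsCliq I t := fun t ht => ((isCFList_cf hcf u).1 t (hu' ▸ ht)).2
  have hHd : ∀ d ∈ cfExts I univ (cf u), H (d.map (ctr I)).prod = gradedTransform I F 1 d := by
    intro d hd
    have hcfd := cf_prod_of_mem_cfExts hcf hd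
    have hd₀ : d ≠ [] := fun h =>
      hne (List.forall₂_nil_right_iff.mp (h ▸ forall₂_subset_of_mem_cfExts hd))
    rw [hH _ (by rwa [hcfd]), hcfd]
  rw [sum_congr rfl hHd, hu', sum_cfExts_gradedTransform hsymm hirr F univ 1 c cs hcs,
    compl_univ, cliqueExts_empty (hcs c List.mem_cons_self), sum_singleton]
  conv_rhs => rw [← prod_cf hcf u, hu']
  simp

theorem sum_isCliq_eq (F H : TM I → R)
    (hH : ∀ c, IsCliq I c →
      H (ctr I c) = ∑ r ∈ cliqueExts I univ c ∅, (-1) ^ #r * F (ctr I (c ∪ r))) :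
    ∑ c, (if IsCliq I c then H (ctr I c) else 0) = F 1 := by
  have hcliques : univ.filter (IsCliq I) = cliqueExts I univ ∅ ∅ := by
    ext c
    simp [Par]
  rw [← sum_filter, hcliques,
    sum_congr rfl fun e he => hH e (by simpa using (mem_cliqueExts.mp he).2.2.1)]
  simpa [cliqueExts_empty (K := ∅) (by simp [IsCliq] : IsCliq I ∅)] using
    sum_cliqueExts_sum_cliqueExts (I := I) univ ∅ ∅ fun s => F (ctr I s)

end TraceMonoid

open TraceMonoid

/-- Graded Möbius inversion for trace monoids: if `cf` assigns to each trace its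
(unique) Cartier–Foata decomposition, `H` is the graded Möbius transform of `F`,
then `F(u) = ∑_{x ∈ M(u)} H(x)`, where `M(u)` is the set of traces of the same
height as `u` admitting `u` as a prefix (and `M(0)` is the set of cliques). -/
theorem graded_mobius_inversion {α : Type*} [Fintype α] (I : α → α → Prop)
    (hsymm : ∀ a b, I a b → I b a) (hirr : ∀ a, ¬ I a a)
    (cf : TM I → List (Finset α))
    (hcf : ∀ u : TM I, (∀ c ∈ cf u, (c : Finset α).Nonempty ∧ IsCliq I c) ∧
      (cf u).Chain' (CFadm I) ∧ ((cf u).map (ctr I)).prod = u)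
    (hcfu : ∀ (u : TM I) (l : List (Finset α)),
      (∀ c ∈ l, (c : Finset α).Nonempty ∧ IsCliq I c) → l.Chain' (CFadm I) →
      (l.map (ctr I)).prod = u → l = cf u)
    (F H : TM I → ℝ)
    (hH1 : H 1 = ∑ c : Finset α, if IsCliq I c then (-1 : ℝ) ^ c.card * F (ctr I c) else 0)
    (hH : ∀ (u : TM I) (hne : cf u ≠ []),
      H u = ∑ c' : Finset α,
        if IsCliq I c' ∧ (cf u).getLast hne ⊆ c' then
          (-1 : ℝ) ^ (c'.card - ((cf u).getLast hne).card) *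
            F ((((cf u).dropLast).map (ctr I)).prod * ctr I c')
        else 0) :
    (∀ u : TM I, u ≠ 1 →
      ∀ hfin : {x : TM I | (cf x).length = (cf u).length ∧ pref I u x}.Finite,
        F u = ∑ x ∈ hfin.toFinset, H x) ∧
    (F 1 = ∑ c : Finset α, if IsCliq I c then H (ctr I c) else 0) := by
  have hnf : IsCFNormalForm I cf := fun u l =>
    ⟨fun h => h ▸ ⟨⟨(hcf u).1, (hcf u).2.1⟩, (hcf u).2.2⟩,
      fun h => (hcfu u l h.1.1 h.1.2 h.2).symm⟩
  have hHt : ∀ x, cf x ≠ [] → H x = gradedTransform I F 1 (cf x) := fun x hne =>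
    (hH x hne).trans (sum_supset_getLast_eq_gradedTransform F hne)
  refine ⟨fun u hu hfin => ?_, (sum_isCliq_eq F H fun c hc => ?_).symm⟩
  · have hM : hfin.toFinset = (cfExts I univ (cf u)).image fun d => (d.map (ctr I)).prod := by
      rw [← coe_inj, Set.Finite.coe_toFinset, setOf_length_cf_eq_pref_eq_image hsymm hirr hnf]
    rw [hM, sum_image_cfExts_eq hsymm hirr hnf F H hHt hu]
  · rcases c.eq_empty_or_nonempty with rfl | hne
    · rw [ctr_empty, hH1]
      simpa using sum_supset_eq_sum_cliqueExts (I := I) ∅ fun s => F (ctr I s)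
    · have hcc : cf (ctr I c) = [c] :=
        (hnf _ _).mpr ⟨⟨by simp [hne, hc], List.isChain_singleton _⟩, by simp⟩
      rw [hHt _ (by simp [hcc]), hcc]
      simp [gradedTransform]
end

section
/- Trace monoids are cancellative: for all x, x', y, z in M(Σ, I), if y·x·z = y·x'·z then x = x'. -/
open scoped Classical

section Aux

variable {α : Type*} {I : α → α → Prop}

/-- Membership of letters is invariant under the trace congruence. -/
lemma TMaux.rel_mem {u v : FreeMonoid α} (h : ConGen.Rel (traceRel I) u v) (x : α) :
    x ∈ FreeMonoid.toList u ↔ x ∈ FreeMonoid.toList v := by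
  induction h with
  | of u v h =>
    obtain ⟨a, b, hI, rfl, rfl⟩ := h
    show x ∈ [a, b] ↔ x ∈ [b, a]
    simp; tauto
  | refl u => rfl
  | symm _ ih => exact ih.symm
  | trans _ _ ih1 ih2 => exact ih1.trans ih2
  | mul h1 h2 ih1 ih2 =>
    simp only [FreeMonoid.toList_mul, List.mem_append, ih1, ih2]

lemma TMaux.rel_erase [DecidableEq α] (hirr : ∀ a, ¬ I a a) (x : α) {u v : FreeMonoid α}
    (h : ConGen.Rel (traceRel I) u v) :
    ConGen.Rel (traceRel I) (FreeMonoid.ofList ((FreeMonoid.toList u).erase x))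
      (FreeMonoid.ofList ((FreeMonoid.toList v).erase x)) := by
  induction h with
  | of u v h =>
    obtain ⟨a, b, hI, rfl, rfl⟩ := h
    by_cases hxa : x = a
    · subst hxa
      have hxb : x ≠ b := fun h => hirr x (h ▸ hI)
      have e1 : ([x, b] : List α).erase x = [b] := by rw [List.erase_cons_head]
      have e2 : ([b, x] : List α).erase x = [b] := by
        rw [List.erase_cons_tail (by simpa using (Ne.symm hxb)), List.erase_cons_head]
      show ConGen.Rel (traceRel I) (FreeMonoid.ofList (([x, b] : List α).erase x))
        (FreeMonoid.ofList (([b, x] : List α).erase x))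
      rw [e1, e2]
      exact ConGen.Rel.refl _
    · by_cases hxb : x = b
      · subst hxb
        have e1 : ([a, x] : List α).erase x = [a] := by
          rw [List.erase_cons_tail (by simpa using (Ne.symm hxa)), List.erase_cons_head]
        have e2 : ([x, a] : List α).erase x = [a] := by rw [List.erase_cons_head]
        show ConGen.Rel (traceRel I) (FreeMonoid.ofList (([a, x] : List α).erase x))
          (FreeMonoid.ofList (([x, a] : List α).erase x))
        rw [e1, e2]
        exact ConGen.Rel.refl _
      · have e1 : ([a, b] : List α).erase x = [a, b] := by
          rw [List.erase_cons_tail (by simpa using (Ne.symm hxa)),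
            List.erase_cons_tail (by simpa using (Ne.symm hxb))]
          simp
        have e2 : ([b, a] : List α).erase x = [b, a] := by
          rw [List.erase_cons_tail (by simpa using (Ne.symm hxb)),
            List.erase_cons_tail (by simpa using (Ne.symm hxa))]
          simp
        show ConGen.Rel (traceRel I) (FreeMonoid.ofList (([a, b] : List α).erase x))
          (FreeMonoid.ofList (([b, a] : List α).erase x))
        rw [e1, e2]
        exact ConGen.Rel.of _ _ ⟨a, b, hI, rfl, rfl⟩
  | refl u => exact ConGen.Rel.refl _
  | symm _ ih => exact ih.symm
  | trans _ _ ih1 ih2 => exact ih1.trans ih2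
  | mul h1 h2 ih1 ih2 =>
    rename_i u v w z
    by_cases hm : x ∈ FreeMonoid.toList u
    · have hm' : x ∈ FreeMonoid.toList v := (TMaux.rel_mem h1 x).mp hm
      rw [FreeMonoid.toList_mul, FreeMonoid.toList_mul,
        List.erase_append_left _ hm, List.erase_append_left _ hm']
      exact ConGen.Rel.mul ih1
        (show ConGen.Rel (traceRel I) (FreeMonoid.ofList (FreeMonoid.toList w))
          (FreeMonoid.ofList (FreeMonoid.toList z)) from h2)
    · have hm' : x ∉ FreeMonoid.toList v := fun h => hm ((TMaux.rel_mem h1 x).mpr h)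
      rw [FreeMonoid.toList_mul, FreeMonoid.toList_mul,
        List.erase_append_right _ hm, List.erase_append_right _ hm']
      exact ConGen.Rel.mul
        (show ConGen.Rel (traceRel I) (FreeMonoid.ofList (FreeMonoid.toList u))
          (FreeMonoid.ofList (FreeMonoid.toList v)) from h1) ih2

/-- Left cancellation of a single letter. -/
lemma TMaux.cancel_letter (hirr : ∀ a, ¬ I a a) (a : α) (x y : TM I)
    (h : emb I a * x = emb I a * y) : x = y := by
  classical
  revert h
  refine Con.induction_on₂ (C := fun u v => emb I a * u = emb I a * v → u = v) x y
    (fun p q hpq => ?_)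
  have h1 : mkTM I (FreeMonoid.of a * p) = mkTM I (FreeMonoid.of a * q) := by
    rw [map_mul, map_mul]; exact hpq
  have h2 : conGen (traceRel I) (FreeMonoid.of a * p) (FreeMonoid.of a * q) :=
    (Con.eq _).mp h1
  have h3 : ConGen.Rel (traceRel I) (FreeMonoid.of a * p) (FreeMonoid.of a * q) := h2
  have h4 := TMaux.rel_erase hirr a h3
  have e1 : (FreeMonoid.toList (FreeMonoid.of a * p)).erase a = FreeMonoid.toList p := by
    show (a :: FreeMonoid.toList p).erase a = _
    rw [List.erase_cons_head]
  have e2 : (FreeMonoid.toList (FreeMonoid.of a * q)).erase a = FreeMonoid.toList q := by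
    show (a :: FreeMonoid.toList q).erase a = _
    rw [List.erase_cons_head]
  rw [e1, e2] at h4
  exact (Con.eq _).mpr h4

/-- Left cancellation by a word. -/
lemma TMaux.cancel_word (hirr : ∀ a, ¬ I a a) (w : List α) :
    ∀ x y : TM I, mkTM I (FreeMonoid.ofList w) * x = mkTM I (FreeMonoid.ofList w) * y → x = y := by
  induction w with
  | nil => intro x y h; simpa using h
  | cons a t ih =>
    intro x y h
    have e : (FreeMonoid.ofList (a :: t) : FreeMonoid α) = FreeMonoid.of a * FreeMonoid.ofList t :=
      rfl
    rw [e, map_mul, mul_assoc, mul_assoc] at h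
    exact ih x y (TMaux.cancel_letter hirr a _ _ h)

/-- General left cancellation. -/
lemma TMaux.lcancel (hirr : ∀ a, ¬ I a a) (y x x' : TM I) (h : y * x = y * x') : x = x' := by
  obtain ⟨w, rfl⟩ := Con.mk'_surjective y
  exact TMaux.cancel_word hirr (FreeMonoid.toList w) x x' h

lemma TMaux.rel_rev (hsymm : ∀ a b, I a b → I b a) {u v : FreeMonoid α}
    (h : ConGen.Rel (traceRel I) u v) :
    ConGen.Rel (traceRel I) (FreeMonoid.ofList (FreeMonoid.toList u).reverse)
      (FreeMonoid.ofList (FreeMonoid.toList v).reverse) := by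
  induction h with
  | of u v h =>
    obtain ⟨a, b, hI, rfl, rfl⟩ := h
    show ConGen.Rel (traceRel I) (FreeMonoid.ofList ([a, b] : List α).reverse)
      (FreeMonoid.ofList ([b, a] : List α).reverse)
    exact ConGen.Rel.of _ _ ⟨b, a, hsymm a b hI, rfl, rfl⟩
  | refl u => exact ConGen.Rel.refl _
  | symm _ ih => exact ih.symm
  | trans _ _ ih1 ih2 => exact ih1.trans ih2
  | mul h1 h2 ih1 ih2 =>
    rename_i u v w z
    rw [FreeMonoid.toList_mul, FreeMonoid.toList_mul,
      List.reverse_append, List.reverse_append]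
    exact ConGen.Rel.mul ih2 ih1

/-- Reversal on the trace monoid. -/
noncomputable def TMaux.revT (I : α → α → Prop) (hsymm : ∀ a b, I a b → I b a) :
    TM I → TM I :=
  Quotient.map' (fun w : FreeMonoid α => FreeMonoid.ofList (FreeMonoid.toList w).reverse)
    (fun _ _ h => TMaux.rel_rev hsymm h)

lemma TMaux.revT_mk (hsymm : ∀ a b, I a b → I b a) (w : FreeMonoid α) :
    TMaux.revT I hsymm (mkTM I w) = mkTM I (FreeMonoid.ofList (FreeMonoid.toList w).reverse) :=
  rfl

lemma TMaux.revT_mul (hsymm : ∀ a b, I a b → I b a) (x y : TM I) :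
    TMaux.revT I hsymm (x * y) = TMaux.revT I hsymm y * TMaux.revT I hsymm x := by
  refine Con.induction_on₂ x y ?_
  intro p q
  have : ((p : TM I) * q) = mkTM I (p * q) := rfl
  rw [this, TMaux.revT_mk]
  have e : (FreeMonoid.toList (p * q)).reverse
      = (FreeMonoid.toList q).reverse ++ (FreeMonoid.toList p).reverse := by
    show (FreeMonoid.toList p ++ FreeMonoid.toList q).reverse = _
    rw [List.reverse_append]
  rw [e]
  rfl

lemma TMaux.revT_revT (hsymm : ∀ a b, I a b → I b a) (x : TM I) :
    TMaux.revT I hsymm (TMaux.revT I hsymm x) = x := by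
  refine Con.induction_on x ?_
  intro p
  show TMaux.revT I hsymm (TMaux.revT I hsymm (mkTM I p)) = mkTM I p
  rw [TMaux.revT_mk, TMaux.revT_mk]
  congr 1
  simp [FreeMonoid.toList_ofList, List.reverse_reverse]

end Aux

/-- Trace monoids are (two-sided) cancellative. -/
theorem trace_monoid_cancellative {α : Type*} [Fintype α] (I : α → α → Prop)
    (hsymm : ∀ a b, I a b → I b a) (hirr : ∀ a, ¬ I a a) :
    ∀ x x' y z : TM I, y * x * z = y * x' * z → x = x' := by
  intro x x' y z h
  rw [mul_assoc, mul_assoc] at h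
  have h1 : x * z = x' * z := TMaux.lcancel hirr y _ _ h
  have h2 := congrArg (TMaux.revT I hsymm) h1
  rw [TMaux.revT_mul, TMaux.revT_mul] at h2
  have h3 : TMaux.revT I hsymm x = TMaux.revT I hsymm x' :=
    TMaux.lcancel hirr _ _ _ h2
  have h4 := congrArg (TMaux.revT I hsymm) h3
  rwa [TMaux.revT_revT, TMaux.revT_revT] at h4
end

section
/- The Green kernel G(x,y) = f(y)/f(x) if x ≤ y and 0 otherwise satisfies: for all x, y ∈ M, Σ_{c clique} (-1)^{|c|} f(c) G(x·c, y) = 1 if x = y, and 0 otherwise. In particular G_y = G(·, y) is Möbius harmonic on M \ {y}. -/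
open scoped Classical

/-! If `x ≰ y`, every term vanishes. If `x ≤ y`, multiplicativity of `f` factors the sum as
`f y / f x` times the signed count `∑ (-1)^|c|` over the cliques `c` with `x·c ≤ y`. These cliques
are exactly the subsets of `A = {a | x·a ≤ y}`: by Levi's lemma, two distinct letters `a, b ∈ A`
commute and `x·a·b ≤ y`. Hence the signed count is `1` if `A = ∅` and `0` otherwise, and `A = ∅`
exactly when `x = y`. Levi's lemma and left cancellativity of `M` come from the projection lemma:
two words represent the same trace iff their projections onto every pair of dependent letters
agree. -/

open FreeMonoid Finset

lemma sum_ite_subset_neg_one_pow_card {β R : Type*} [Fintype β] [Ring R] (m : Finset β) :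
    (∑ c : Finset β, if c ⊆ m then (-1 : R) ^ c.card else 0) = if m = ∅ then 1 else 0 := by
  rw [← sum_filter, filter_subset_univ]
  exact_mod_cast congrArg (Int.cast : ℤ → R) sum_powerset_neg_one_pow_card

section

variable {α : Type*} {I : α → α → Prop}

/-- The dependence relation `D` of `(Σ, I)`. -/
def Dep (I : α → α → Prop) (a b : α) : Prop := a = b ∨ ¬ I a b

noncomputable def pairProj (a b : α) (l : List α) : List α := l.filter fun x => x = a ∨ x = b

lemma pairProj_cons (a b x : α) (l : List α) :
    pairProj a b (x :: l) = if x = a ∨ x = b then x :: pairProj a b l else pairProj a b l := by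
  simp only [pairProj, List.filter_cons, decide_eq_true_eq]

lemma pairProj_append (a b : α) (l l' : List α) :
    pairProj a b (l ++ l') = pairProj a b l ++ pairProj a b l' :=
  List.filter_append ..

lemma mem_pairProj {a b x : α} {l : List α} : x ∈ pairProj a b l ↔ x ∈ l ∧ (x = a ∨ x = b) := by
  simp [pairProj]

lemma head?_pairProj_append {c b : α} {p : List α} (hc : c ∈ p) (hb : b ∉ p) (l : List α) :
    (pairProj c b (p ++ l)).head? = some c := by
  induction p with
  | nil => simp at hc
  | cons x p ih =>
    rw [List.cons_append, pairProj_cons]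
    rw [List.mem_cons, not_or] at hb
    by_cases hxc : x = c
    · simp [hxc]
    · have hxb : x ≠ b := fun h => hb.1 h.symm
      rw [if_neg (by tauto)]
      exact ih ((List.mem_cons.1 hc).resolve_left fun h => hxc h.symm) hb.2

lemma pairProj_eq_of_rel (hsymm : ∀ a b, I a b → I b a) {a b : α} (hab : Dep I a b)
    {u v : FreeMonoid α} (h : ConGen.Rel (traceRel I) u v) :
    pairProj a b (toList u) = pairProj a b (toList v) := by
  induction h with
  | of x y hxy =>
    obtain ⟨c, d, hcd, rfl, rfl⟩ := hxy
    by_cases hne : c = d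
    · rw [hne]
    -- two distinct letters that both survive the projection would be `a` and `b` themselves
    have : ¬ ((c = a ∨ c = b) ∧ (d = a ∨ d = b)) := by
      rintro ⟨hc | hc, hd | hd⟩ <;> subst hc hd
      · exact hne rfl
      · exact hab.elim hne (· hcd)
      · exact hab.elim (fun h => hne h.symm) (· (hsymm _ _ hcd))
      · exact hne rfl
    by_cases h1 : c = a ∨ c = b <;> by_cases h2 : d = a ∨ d = b
    · exact absurd ⟨h1, h2⟩ this
    all_goals simp [toList_mul, pairProj_cons, h1, h2]
  | refl => rfl
  | symm _ ih => exact ih.symm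
  | trans _ _ ih1 ih2 => exact ih1.trans ih2
  | mul _ _ ih1 ih2 => simp [toList_mul, pairProj_append, ih1, ih2]

lemma pairProj_eq_of_mkTM_eq (hsymm : ∀ a b, I a b → I b a) {a b : α} (hab : Dep I a b)
    {u v : List α} (h : mkTM I (ofList u) = mkTM I (ofList v)) :
    pairProj a b u = pairProj a b v := by
  simpa using pairProj_eq_of_rel hsymm hab ((Con.eq _).1 h)

lemma mkTM_ofList (l : List α) : mkTM I (ofList l) = (l.map (emb I)).prod := by
  induction l with
  | nil => exact map_one _
  | cons a l ih => rw [ofList_cons, map_mul, ih, List.map_cons, List.prod_cons]; rfl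

lemma mkTM_ofList_cons (a : α) (l : List α) :
    mkTM I (ofList (a :: l)) = emb I a * mkTM I (ofList l) := by
  rw [ofList_cons, map_mul]; rfl

lemma emb_commute {a b : α} (h : I a b) : Commute (emb I a) (emb I b) :=
  (Con.eq _).2 (ConGen.Rel.of _ _ ⟨a, b, h, rfl, rfl⟩)

lemma mkTM_append_cons_of_forall {a : α} {p : List α} (hp : ∀ c ∈ p, I c a) (q : List α) :
    mkTM I (ofList (p ++ a :: q)) = mkTM I (ofList (a :: (p ++ q))) := by
  have hcomm : Commute (p.map (emb I)).prod (emb I a) :=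
    Commute.list_prod_left _ _ fun x hx => by
      obtain ⟨c, hc, rfl⟩ := List.mem_map.1 hx
      exact emb_commute (hp c hc)
  simp only [mkTM_ofList, List.map_append, List.map_cons, List.prod_append, List.prod_cons]
  rw [← mul_assoc, hcomm.eq, mul_assoc]

lemma exists_split_of_pairProj_cons_eq (hsymm : ∀ a b, I a b → I b a) {a : α} {u v : List α}
    (h : ∀ c d, Dep I c d → pairProj c d (a :: u) = pairProj c d v) :
    ∃ p q, v = p ++ a :: q ∧ a ∉ p ∧ (∀ c ∈ p, I c a) ∧
      ∀ c d, Dep I c d → pairProj c d u = pairProj c d (p ++ q) := by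
  have hav : a ∈ v := by
    have hmem : a ∈ pairProj a a (a :: u) := mem_pairProj.2 ⟨List.mem_cons_self, Or.inl rfl⟩
    exact (mem_pairProj.1 (h a a (Or.inl rfl) ▸ hmem)).1
  obtain ⟨p, q, hap, rfl, -⟩ := List.exists_erase_eq hav
  have hpa : ∀ c ∈ p, I c a := by
    intro c hc
    by_contra hca
    have hhead := head?_pairProj_append hc hap (a :: q)
    rw [← h c a (Or.inr hca), pairProj_cons, if_pos (Or.inr rfl), List.head?_cons,
      Option.some.injEq] at hhead
    exact hap (hhead ▸ hc)
  refine ⟨p, q, rfl, hap, hpa, fun c d hcd => ?_⟩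
  have hcons := h c d hcd
  rw [pairProj_eq_of_mkTM_eq hsymm hcd (mkTM_append_cons_of_forall hpa q), pairProj_cons,
    pairProj_cons] at hcons
  split_ifs at hcons
  exacts [List.cons_injective hcons, hcons]

lemma mkTM_eq_of_pairProj_eq (hsymm : ∀ a b, I a b → I b a) {u v : List α}
    (h : ∀ c d, Dep I c d → pairProj c d u = pairProj c d v) :
    mkTM I (ofList u) = mkTM I (ofList v) := by
  induction u generalizing v with
  | nil =>
    cases v with
    | nil => rfl
    | cons x v => exact absurd (h x x (Or.inl rfl)) (by simp [pairProj])
  | cons a u ih =>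
    obtain ⟨p, q, rfl, -, hpa, hproj⟩ := exists_split_of_pairProj_cons_eq hsymm h
    rw [mkTM_append_cons_of_forall hpa, mkTM_ofList_cons, mkTM_ofList_cons, ih hproj]

lemma exists_list_eq_mkTM (x : TM I) : ∃ l : List α, x = mkTM I (ofList l) := by
  obtain ⟨w, hw⟩ := Con.mk'_surjective (c := conGen (traceRel I)) x
  exact ⟨toList w, hw.symm⟩

lemma exists_split_of_emb_mul_eq (hsymm : ∀ a b, I a b → I b a) {a : α} {u v : List α}
    (h : emb I a * mkTM I (ofList u) = mkTM I (ofList v)) :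
    ∃ p q, v = p ++ a :: q ∧ a ∉ p ∧ (∀ c ∈ p, I c a) ∧
      mkTM I (ofList u) = mkTM I (ofList (p ++ q)) := by
  rw [← mkTM_ofList_cons] at h
  obtain ⟨p, q, rfl, hap, hpa, hproj⟩ :=
    exists_split_of_pairProj_cons_eq hsymm fun c d hcd => pairProj_eq_of_mkTM_eq hsymm hcd h
  exact ⟨p, q, rfl, hap, hpa, mkTM_eq_of_pairProj_eq hsymm hproj⟩

lemma emb_mul_left_cancel (hsymm : ∀ a b, I a b → I b a) {a : α} {u v : TM I}
    (h : emb I a * u = emb I a * v) : u = v := by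
  obtain ⟨lu, rfl⟩ := exists_list_eq_mkTM u
  obtain ⟨lv, rfl⟩ := exists_list_eq_mkTM v
  rw [← mkTM_ofList_cons a lv] at h
  obtain ⟨p, q, hpq, hap, -, hu⟩ := exists_split_of_emb_mul_eq hsymm h
  cases p with
  | nil => rw [hu, List.nil_append, List.cons_injective hpq]
  | cons x p => exact (hap ((List.cons.inj hpq).1 ▸ List.mem_cons_self)).elim

lemma trace_mul_left_cancel (hsymm : ∀ a b, I a b → I b a) {x u v : TM I}
    (h : x * u = x * v) : u = v := by
  obtain ⟨l, rfl⟩ := exists_list_eq_mkTM x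
  induction l with
  | nil => simpa [ofList_nil, map_one] using h
  | cons a l ih =>
    rw [mkTM_ofList_cons, mul_assoc, mul_assoc] at h
    exact ih (emb_mul_left_cancel hsymm h)

lemma emb_mul_ne_one (hsymm : ∀ a b, I a b → I b a) (a : α) (u : TM I) : emb I a * u ≠ 1 := by
  obtain ⟨l, rfl⟩ := exists_list_eq_mkTM u
  intro h
  rw [← map_one (mkTM I), ← ofList_nil] at h
  obtain ⟨p, q, hpq, -⟩ := exists_split_of_emb_mul_eq hsymm h
  simp at hpq

/-- Levi's lemma for distinct first letters. -/
lemma emb_mul_eq_emb_mul (hsymm : ∀ a b, I a b → I b a) {a b : α} (hne : a ≠ b) {u v : TM I}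
    (h : emb I a * u = emb I b * v) : I a b ∧ ∃ w, u = emb I b * w := by
  obtain ⟨lu, rfl⟩ := exists_list_eq_mkTM u
  obtain ⟨lv, rfl⟩ := exists_list_eq_mkTM v
  rw [← mkTM_ofList_cons b lv] at h
  obtain ⟨p, q, hpq, -, hpa, hu⟩ := exists_split_of_emb_mul_eq hsymm h
  cases p with
  | nil => exact absurd (List.cons.inj hpq).1 hne.symm
  | cons x p =>
    obtain ⟨rfl, -⟩ := List.cons.inj hpq
    exact ⟨hsymm _ _ (hpa b List.mem_cons_self), _, by rw [hu, List.cons_append, mkTM_ofList_cons]⟩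

lemma ctr_eq_prod (c : Finset α) : ctr I c = (c.toList.map (emb I)).prod := by
  rw [ctr, map_list_prod, List.map_map]; rfl

lemma ctr_empty : ctr I (∅ : Finset α) = 1 := by simp [ctr_eq_prod]

lemma ctr_insert {a : α} {s : Finset α} (hc : IsCliq I (insert a s)) (ha : a ∉ s) :
    ctr I (insert a s) = emb I a * ctr I s := by
  rw [ctr_eq_prod, ctr_eq_prod, ((toList_insert ha).map (emb I)).prod_eq', List.map_cons,
    List.prod_cons]
  rw [List.pairwise_map]
  exact (nodup_toList _).imp_of_mem fun hx hy hne =>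
    emb_commute (hc _ (mem_toList.1 hx) _ (mem_toList.1 hy) hne)

lemma pref_of_pref_mul {x u y : TM I} (h : pref I (x * u) y) : pref I x y := by
  obtain ⟨w, rfl⟩ := h
  exact ⟨u * w, mul_assoc x u w⟩

lemma pref_mul_emb_mul_emb (hsymm : ∀ a b, I a b → I b a) {x y : TM I} {a b : α} (hne : a ≠ b)
    (ha : pref I (x * emb I a) y) (hb : pref I (x * emb I b) y) :
    I a b ∧ pref I (x * emb I a * emb I b) y := by
  obtain ⟨u, hu⟩ := ha
  obtain ⟨v, hv⟩ := hb
  have h : emb I a * u = emb I b * v :=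
    trace_mul_left_cancel hsymm (x := x) (by rw [← mul_assoc, ← mul_assoc, ← hu, ← hv])
  obtain ⟨hab, w, rfl⟩ := emb_mul_eq_emb_mul hsymm hne h
  exact ⟨hab, w, by rw [hu, mul_assoc, mul_assoc, mul_assoc]⟩

lemma isCliq_and_pref_mul_ctr_of_forall (hsymm : ∀ a b, I a b → I b a) {x y : TM I}
    (hxy : pref I x y) {c : Finset α} (h : ∀ a ∈ c, pref I (x * emb I a) y) :
    IsCliq I c ∧ pref I (x * ctr I c) y := by
  induction c using Finset.induction_on generalizing x with
  | empty => exact ⟨by simp [IsCliq], by rwa [ctr_empty, mul_one]⟩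
  | insert a s has ih =>
    have hcl : IsCliq I (insert a s) := fun u hu v hv huv =>
      (pref_mul_emb_mul_emb hsymm huv (h u hu) (h v hv)).1
    have has' : ∀ b ∈ s, pref I (x * emb I a * emb I b) y := fun b hb =>
      (pref_mul_emb_mul_emb hsymm (ne_of_mem_of_not_mem hb has).symm
        (h a (mem_insert_self a s)) (h b (mem_insert_of_mem hb))).2
    refine ⟨hcl, ?_⟩
    rw [ctr_insert hcl has, ← mul_assoc]
    exact (ih (h a (mem_insert_self a s)) has').2

lemma isCliq_and_pref_mul_ctr_iff (hsymm : ∀ a b, I a b → I b a) {x y : TM I} (hxy : pref I x y)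
    (c : Finset α) :
    IsCliq I c ∧ pref I (x * ctr I c) y ↔ ∀ a ∈ c, pref I (x * emb I a) y := by
  refine ⟨fun ⟨hcl, hpref⟩ a ha => ?_, isCliq_and_pref_mul_ctr_of_forall hsymm hxy⟩
  rw [← insert_erase ha] at hcl hpref
  rw [ctr_insert hcl (notMem_erase a c), ← mul_assoc] at hpref
  exact pref_of_pref_mul hpref

lemma exists_pref_mul_emb_iff_ne (hsymm : ∀ a b, I a b → I b a) {x y : TM I} (hxy : pref I x y) :
    (∃ a, pref I (x * emb I a) y) ↔ x ≠ y := by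
  constructor
  · rintro ⟨a, w, hw⟩ rfl
    refine emb_mul_ne_one hsymm a w (trace_mul_left_cancel hsymm (x := x) ?_).symm
    rw [mul_one, ← mul_assoc, ← hw]
  · intro hne
    obtain ⟨u, rfl⟩ := hxy
    obtain ⟨l, rfl⟩ := exists_list_eq_mkTM u
    cases l with
    | nil => exact absurd (by rw [ofList_nil, map_one, mul_one]) hne
    | cons a l => exact ⟨a, _, by rw [mkTM_ofList_cons, mul_assoc]⟩

lemma sum_neg_one_pow_card_isCliq_pref [Fintype α] {R : Type*} [Ring R]
    (hsymm : ∀ a b, I a b → I b a) {x y : TM I} (hxy : pref I x y) :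
    (∑ c : Finset α, if IsCliq I c ∧ pref I (x * ctr I c) y then (-1 : R) ^ c.card else 0) =
      if x = y then 1 else 0 := by
  set m : Finset α := {a | pref I (x * emb I a) y}
  have hsubset (c : Finset α) : IsCliq I c ∧ pref I (x * ctr I c) y ↔ c ⊆ m := by
    simpa [subset_iff, m] using isCliq_and_pref_mul_ctr_iff hsymm hxy c
  have hm : m = ∅ ↔ x = y := by
    simpa [eq_empty_iff_forall_notMem, m] using (exists_pref_mul_emb_iff_ne hsymm hxy).not
  simp only [hsubset, sum_ite_subset_neg_one_pow_card, hm]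

end

theorem green_kernel_laplacian_general {α : Type*} [Fintype α] (I : α → α → Prop)
    (hsymm : ∀ a b, I a b → I b a)
    (f : TM I → ℝ) (hfpos : ∀ u, 0 < f u)
    (hfmul : ∀ u v : TM I, f (u * v) = f u * f v)
    (G : TM I → TM I → ℝ)
    (hG : ∀ x y : TM I, G x y = if pref I x y then f y / f x else 0) :
    ∀ x y : TM I,
      (∑ c : Finset α,
        if IsCliq I c then (-1 : ℝ) ^ c.card * f (ctr I c) * G (x * ctr I c) y else 0) =
      if x = y then 1 else 0 := by
  intro x y
  by_cases hxy : pref I x y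
  · have hterm (c : Finset α) :
        (if IsCliq I c then (-1 : ℝ) ^ c.card * f (ctr I c) * G (x * ctr I c) y else 0) =
          f y / f x * if IsCliq I c ∧ pref I (x * ctr I c) y then (-1 : ℝ) ^ c.card else 0 := by
      by_cases hcl : IsCliq I c <;> by_cases hpref : pref I (x * ctr I c) y <;>
        simp only [hcl, hpref, hG, hfmul, if_true, if_false, and_true, and_false, mul_zero]
      field_simp [(hfpos x).ne', (hfpos (ctr I c)).ne']
    rw [sum_congr rfl fun c _ => hterm c, ← mul_sum, sum_neg_one_pow_card_isCliq_pref hsymm hxy]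
    split_ifs with hxy'
    · rw [hxy', mul_one, div_self (hfpos y).ne']
    · rw [mul_zero]
  · rw [if_neg fun h => hxy ⟨1, by rw [h, mul_one]⟩]
    refine sum_eq_zero fun c _ => ?_
    split_ifs
    · rw [hG, if_neg fun hp => hxy (pref_of_pref_mul hp), mul_zero]
    · rfl

/-- The Green kernel `G(x,y) = f(y)/f(x)` if `x ≤ y` (else 0) satisfies
`ΔG_y(x) = 1` if `x = y` and `0` otherwise; in particular `G_y` is Möbius
harmonic on `M \ {y}`. -/
theorem green_kernel_laplacian {α : Type*} [Fintype α] (I : α → α → Prop)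
    (hsymm : ∀ a b, I a b → I b a) (hirr : ∀ a, ¬ I a a)
    (f : TM I → ℝ) (hfpos : ∀ u, 0 < f u)
    (hfmul : ∀ u v : TM I, f (u * v) = f u * f v)
    (hmob : (∑ c : Finset α, if IsCliq I c then (-1 : ℝ) ^ c.card * f (ctr I c) else 0) = 0)
    (G : TM I → TM I → ℝ)
    (hG : ∀ x y : TM I, G x y = if pref I x y then f y / f x else 0) :
    ∀ x y : TM I,
      (∑ c : Finset α,
        if IsCliq I c then (-1 : ℝ) ^ c.card * f (ctr I c) * G (x * ctr I c) y else 0) =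
      if x = y then 1 else 0 :=
  green_kernel_laplacian_general I hsymm f hfpos hfmul G hG
end

section
/- Failure of the positivity inequality for unbounded harmonic functions: in the trace monoid on the 5-cycle with uniform valuation f(u) = p₀^{|u|}, the unbounded nonnegative Möbius harmonic function λ(u) = (p₁/p₀)^{|u|} satisfies, at u = a₁ (whose last Cartier-Foata clique is c = {a₁}, with parallel letters a₃, a₄): λ(a₁) - f(a₃)λ(a₁·a₃) - f(a₄)λ(a₁·a₄) = (p₁/p₀)(1 - 2p₁) < 0. -/
open scoped Classical

/-- The 5-cycle independence graph on `Fin 5`: the letter `0` is independent of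
its neighbours `1` and `4`, and `{1, 4}` is not a clique. -/
def I5 : Fin 5 → Fin 5 → Prop := fun a b => a ≠ b ∧ (b = a + 1 ∨ a = b + 1)

/-- `p₀ = 1/2 - √5/10`. -/
noncomputable def p0 : ℝ := 1 / 2 - Real.sqrt 5 / 10

/-- `p₁ = 1/2 + √5/10`. -/
noncomputable def p1 : ℝ := 1 / 2 + Real.sqrt 5 / 10

/-
With `r = p₁/p₀`, each correction term is `p₀ · r² = p₁ · r`, so the left-hand side is
`r - 2 p₁ r = r (1 - 2 p₁)`; this is negative because `p₁ > 1/2` while `r > 0`.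
-/

lemma p0_pos : 0 < p0 := by
  have : Real.sqrt 5 < 5 := by
    rw [Real.sqrt_lt' (by norm_num)]
    norm_num
  unfold p0
  linarith

lemma half_lt_p1 : 1 / 2 < p1 := by
  have : 0 < Real.sqrt 5 := by positivity
  unfold p1
  linarith

lemma mul_div_sq_eq_mul_div {K : Type*} [Field K] {x : K} (hx : x ≠ 0) (y : K) :
    x * (y / x) ^ 2 = y * (y / x) := by
  field_simp

/-- Failure of the positivity inequality for the unbounded nonnegative Möbius
harmonic function `λ(u) = (p₁/p₀)^{|u|}` at `u = a₁` (here `a₁ = 0`, with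
parallel letters `a₃ = 1` and `a₄ = 4`):
`λ(a₁) - f(a₃)λ(a₁a₃) - f(a₄)λ(a₁a₄) = (p₁/p₀)(1 - 2p₁) < 0`. -/
theorem positivity_failure_C5
    (len : TM I5 → ℕ) (hlen1 : ∀ a : Fin 5, len (emb I5 a) = 1)
    (hlenm : ∀ u v : TM I5, len (u * v) = len u + len v) :
    (p1 / p0) ^ (len (emb I5 0))
      - p0 ^ (len (emb I5 1)) * (p1 / p0) ^ (len (emb I5 0 * emb I5 1))
      - p0 ^ (len (emb I5 4)) * (p1 / p0) ^ (len (emb I5 0 * emb I5 4))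
      = (p1 / p0) * (1 - 2 * p1) ∧
    (p1 / p0) * (1 - 2 * p1) < 0 := by
  have hlen2 (a b : Fin 5) : len (emb I5 a * emb I5 b) = 2 := by
    rw [hlenm, hlen1, hlen1]
  have hp1 : 0 < p1 := lt_trans (by norm_num) half_lt_p1
  refine ⟨?_, mul_neg_of_pos_of_neg (div_pos hp1 p0_pos) (by linarith [half_lt_p1])⟩
  rw [hlen1, hlen1, hlen1, hlen2, hlen2, pow_one, pow_one, mul_div_sq_eq_mul_div p0_pos.ne']
  ring
end
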